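/- arXiv:2009.10544 — 2 statements merged into one kernel-verified Lean document; each statement's English description precedes it below -/
import Mathlib

section
/- Let G be a countable group acting continuously on a compact metric space X, and let μ be a probability measure on G whose support S is finite and generates G. Assume (i) μ is evenly distributed: for all n, m ∈ ℕ there is μ_{n,m} ∈ [0,1] such that μ^{*n}({g}) = μ_{n,m} for every g ∈ G with ‖g‖_S = m; and (ii) for every continuous f : X → ℝ and every x ∈ X, lim_{n→∞} (1/|G_n|) Σ_{g ∈ G_n} f(gx) = ∫_X f dν for a Borel probability measure ν. Then for every x ∈ X, the measures μ^{*n} * δ_x converge to ν in the weak-* topology, where δ_x is the Dirac measure at x. -/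
/-!
Since `μ^{*n}({g})` depends only on `‖g‖_S`, the integral of `f` against `μ^{*n} * δ_x` is the
convex combination `∑_{m ≤ n} μ^{*n}(G_m) A_m` of the sphere averages
`A_m = |G_m|⁻¹ ∑_{g ∈ G_m} f(g x)`, which converge to `∫ f dν`. So it suffices that
`μ^{*n}({g}) → 0` for every `g`, which follows once the collision probabilities
`F(n) = ∑_g μ^{*n}(g)²` tend to `0`.

Writing `μ^{*(N+k)} = μ^{*N} * μ^{*k}`, Jensen's inequality for `t ↦ t²` shows that `F` decreases,
and its gap term shows that `μ^{*k}(y⁻¹ ·)` becomes independent of `y ∈ S^N` as `k → ∞`. If `F`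
decreased to `Φ > 0`, a point of `μ^{*k}`-mass `≥ Φ` would then produce `|S^N|` points of mass
`> Φ/2`, which is impossible once `|S^N| ≥ 2/Φ`. Such `N` exist: the sphere averages of `1` converge
to `1`, so all spheres are nonempty, and since `S` generates `G` as a monoid we have `1 ∈ S^ρ` for
some `ρ ≥ 1`, and one element from each of the spheres of radii `0, ρ, …, (J-1)ρ` gives `J` distinct
elements of `S^{Jρ}`.
-/

open MeasureTheory Filter Topology

noncomputable section

namespace RWalk

variable {G : Type*} [Group G] [MeasurableSpace G]

/-- The `n`-fold convolution power of a measure on a group, with `μ^{*0} = δ_e`. -/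
def convPow (μ : Measure G) : ℕ → Measure G
  | 0 => Measure.dirac 1
  | n + 1 => (convPow μ n).mconv μ

/-- The word length of `g` with respect to a generating set `S`:
`‖g‖_S = min {n | g = s₁ ⋯ s_n, sᵢ ∈ S}`. -/
def wordLen (S : Set G) (g : G) : ℕ :=
  sInf {n | ∃ l : List G, l.length = n ∧ (∀ s ∈ l, s ∈ S) ∧ l.prod = g}

/-- Convolution `μ * ν` of a measure `μ` on `G` with a measure `ν` on a `G`-space `X`:
the pushforward of `μ ⊗ ν` under the action map `(g,x) ↦ g • x`. -/
def actConv {X : Type*} [MeasurableSpace X] [MulAction G X]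
    (μ : Measure G) (ν : Measure X) : Measure X :=
  Measure.map (fun p : G × X => p.1 • p.2) (μ.prod ν)

end RWalk

open RWalk

open Finset Pointwise

theorem sq_sum_mul_add_min_mul_sq_sub_le {ι : Type*} {A : Finset ι} {w a : ι → ℝ}
    (hw : ∀ i ∈ A, 0 ≤ w i) (hw1 : ∑ i ∈ A, w i = 1) {i j : ι} (hi : i ∈ A) (hj : j ∈ A) :
    (∑ l ∈ A, w l * a l) ^ 2 + min (w i) (w j) / 2 * (a i - a j) ^ 2 ≤
      ∑ l ∈ A, w l * a l ^ 2 := by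
  classical
  set c := ∑ l ∈ A, w l * a l
  have hvar : ∑ l ∈ A, w l * (a l - c) ^ 2 = ∑ l ∈ A, w l * a l ^ 2 - c ^ 2 := by
    have : ∀ l, w l * (a l - c) ^ 2 = w l * a l ^ 2 - 2 * c * (w l * a l) + c ^ 2 * w l :=
      fun l ↦ by ring
    simp only [this, sum_add_distrib, sum_sub_distrib, ← mul_sum, hw1]
    ring
  have hpair : min (w i) (w j) / 2 * (a i - a j) ^ 2 ≤ ∑ l ∈ A, w l * (a l - c) ^ 2 := by
    have hnonneg : ∀ l ∈ A, 0 ≤ w l * (a l - c) ^ 2 := fun l hl ↦ mul_nonneg (hw l hl) (sq_nonneg _)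
    rcases eq_or_ne i j with rfl | hij
    · simpa using sum_nonneg hnonneg
    have hmin : 0 ≤ min (w i) (w j) := le_min (hw i hi) (hw j hj)
    calc min (w i) (w j) / 2 * (a i - a j) ^ 2
        ≤ w i * (a i - c) ^ 2 + w j * (a j - c) ^ 2 := by
          nlinarith [min_le_left (w i) (w j), min_le_right (w i) (w j),
            mul_nonneg hmin (sq_nonneg (a i + a j - 2 * c)),
            mul_nonneg (sub_nonneg.2 (min_le_left (w i) (w j))) (sq_nonneg (a i - c)),
            mul_nonneg (sub_nonneg.2 (min_le_right (w i) (w j))) (sq_nonneg (a j - c))]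
      _ = ∑ l ∈ {i, j}, w l * (a l - c) ^ 2 := by rw [sum_pair hij]
      _ ≤ _ := sum_le_sum_of_subset_of_nonneg (by simp [insert_subset_iff, hi, hj])
          fun l hl _ ↦ hnonneg l hl
  linarith

theorem tendsto_sum_range_mul_of_tendsto_zero {w : ℕ → ℕ → ℝ} {b : ℕ → ℝ}
    (hw0 : ∀ n m, 0 ≤ w n m) (hw1 : ∀ n, ∑ m ∈ range (n + 1), w n m ≤ 1)
    (hw : ∀ m, Tendsto (fun n ↦ w n m) atTop (𝓝 0)) (hb : Tendsto b atTop (𝓝 0)) :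
    Tendsto (fun n ↦ ∑ m ∈ range (n + 1), w n m * b m) atTop (𝓝 0) := by
  obtain ⟨C, hC⟩ := isBounded_iff_forall_norm_le.1 (Metric.isBounded_range_of_tendsto _ hb)
  refine Metric.tendsto_nhds.2 fun ε hε ↦ ?_
  have hb' : Tendsto (fun m ↦ |b m|) atTop (𝓝 0) := by simpa using hb.abs
  obtain ⟨M, hM⟩ := eventually_atTop.1 (hb'.eventually_lt_const (half_pos hε))
  have hsmall : ∀ᶠ n in atTop, C * ∑ m ∈ range M, w n m < ε / 2 := by
    refine Tendsto.eventually_lt_const (half_pos hε) ?_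
    simpa using (tendsto_finsetSum (range M) fun m _ ↦ hw m).const_mul C
  filter_upwards [hsmall, eventually_ge_atTop M] with n hn hnM
  rw [Real.dist_eq, sub_zero]
  calc |∑ m ∈ range (n + 1), w n m * b m|
      ≤ ∑ m ∈ range (n + 1), w n m * |b m| := by
        refine (abs_sum_le_sum_abs _ _).trans_eq (sum_congr rfl fun m _ ↦ ?_)
        rw [abs_mul, abs_of_nonneg (hw0 n m)]
    _ = ∑ m ∈ range M, w n m * |b m| + ∑ m ∈ Ico M (n + 1), w n m * |b m| :=
        (sum_range_add_sum_Ico _ (by omega)).symm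
    _ ≤ ∑ m ∈ range M, w n m * C + ∑ m ∈ Ico M (n + 1), w n m * (ε / 2) := by
        gcongr with m _ m hm
        · exact hw0 n m
        · simpa using hC _ (Set.mem_range_self m)
        · exact hw0 n m
        · exact (hM m (mem_Ico.1 hm).1).le
    _ = C * ∑ m ∈ range M, w n m + ε / 2 * ∑ m ∈ Ico M (n + 1), w n m := by
        rw [← sum_mul, ← sum_mul]; ring
    _ ≤ C * ∑ m ∈ range M, w n m + ε / 2 * ∑ m ∈ range (n + 1), w n m := by
        gcongr
        · exact fun m _ _ ↦ hw0 n m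
        · exact fun m hm ↦ mem_range.2 (mem_Ico.1 hm).2
    _ < ε := by nlinarith [hw1 n]

theorem tendsto_sum_range_mul_of_tendsto {w : ℕ → ℕ → ℝ} {a : ℕ → ℝ} {L : ℝ}
    (hw0 : ∀ n m, 0 ≤ w n m) (hw1 : ∀ n, ∑ m ∈ range (n + 1), w n m = 1)
    (hw : ∀ m, Tendsto (fun n ↦ w n m) atTop (𝓝 0)) (ha : Tendsto a atTop (𝓝 L)) :
    Tendsto (fun n ↦ ∑ m ∈ range (n + 1), w n m * a m) atTop (𝓝 L) := by
  have hsplit : ∀ n, ∑ m ∈ range (n + 1), w n m * a m =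
      ∑ m ∈ range (n + 1), w n m * (a m - L) + L := fun n ↦ by
    simp [mul_sub, sum_sub_distrib, ← sum_mul, hw1]
  simpa [hsplit] using (tendsto_sum_range_mul_of_tendsto_zero hw0 (fun n ↦ (hw1 n).le) hw
    (tendsto_sub_nhds_zero_iff.2 ha)).add_const L

theorem sum_mul_eq_sum_mul_sum_div_card {ι : Type*} {A : Finset ι} {q v : ι → ℝ}
    (hq : ∀ i ∈ A, ∀ j ∈ A, q i = q j) :
    ∑ i ∈ A, q i * v i = (∑ i ∈ A, q i) * ((∑ i ∈ A, v i) / #A) := by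
  rcases A.eq_empty_or_nonempty with rfl | ⟨i, hi⟩
  · simp
  rw [sum_congr rfl fun j hj ↦ by rw [hq j hj i hi], ← mul_sum,
    sum_congr rfl fun j hj ↦ hq j hj i hi, sum_const, nsmul_eq_mul]
  have : (#A : ℝ) ≠ 0 := Nat.cast_ne_zero.2 (card_ne_zero_of_mem hi)
  field_simp

namespace RWalk

section WordLength

variable {G : Type*} [Group G] [DecidableEq G] {S : Finset G} {g : G} {m n ρ : ℕ}

theorem mem_pow_iff_exists_list :
    g ∈ S ^ n ↔ ∃ l : List G, l.length = n ∧ (∀ s ∈ l, s ∈ S) ∧ l.prod = g := by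
  induction n generalizing g with
  | zero => simp [List.length_eq_zero_iff, eq_comm]
  | succ n ih =>
    rw [pow_succ', Finset.mem_mul]
    constructor
    · rintro ⟨s, hs, _, hh, rfl⟩
      obtain ⟨l, rfl, hl, rfl⟩ := ih.1 hh
      exact ⟨s :: l, rfl, by simpa [hs] using hl, rfl⟩
    · rintro ⟨_ | ⟨s, l⟩, hlen, hl, rfl⟩
      · simp at hlen
      · simp only [List.mem_cons, forall_eq_or_imp] at hl
        exact ⟨s, hl.1, l.prod, ih.2 ⟨l, by simpa using hlen, hl.2, rfl⟩, rfl⟩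

theorem wordLen_eq_sInf : wordLen (S : Set G) g = sInf {n | g ∈ S ^ n} := by
  simp only [wordLen, mem_coe, mem_pow_iff_exists_list]

theorem wordLen_le_of_mem_pow (h : g ∈ S ^ n) : wordLen (S : Set G) g ≤ n := by
  rw [wordLen_eq_sInf]
  exact Nat.sInf_le h

theorem mem_pow_wordLen_of_mem_pow (h : g ∈ S ^ n) : g ∈ S ^ wordLen (S : Set G) g := by
  rw [wordLen_eq_sInf]
  exact Nat.sInf_mem (s := {n | g ∈ S ^ n}) ⟨n, h⟩

theorem mem_pow_wordLen_of_ne_zero (h : wordLen (S : Set G) g ≠ 0) :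
    g ∈ S ^ wordLen (S : Set G) g := by
  rw [wordLen_eq_sInf] at h ⊢
  exact Nat.sInf_mem (s := {n | g ∈ S ^ n}) (Nat.nonempty_of_pos_sInf (Nat.pos_of_ne_zero h))

theorem wordLen_one : wordLen (S : Set G) 1 = 0 :=
  Nat.le_zero.1 (wordLen_le_of_mem_pow (n := 0) (by simp))

/-- Unlike `{g | wordLen S g = m}`, which for `m = 0` also contains every element that is not a
product of elements of `S` (as `sInf ∅ = 0`), this is exactly the set of words of length `m`. -/
def sphere (S : Finset G) (m : ℕ) : Finset G := {g ∈ S ^ m | wordLen (S : Set G) g = m}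

theorem mem_sphere : g ∈ sphere S m ↔ g ∈ S ^ m ∧ wordLen (S : Set G) g = m := mem_filter

theorem coe_sphere (hm : m ≠ 0) : (sphere S m : Set G) = {g | wordLen (S : Set G) g = m} := by
  ext g
  simp only [mem_coe, mem_sphere, Set.mem_ofPred_eq, and_iff_right_iff_imp]
  rintro rfl
  exact mem_pow_wordLen_of_ne_zero hm

theorem pow_subset_biUnion_sphere : S ^ n ⊆ (range (n + 1)).biUnion (sphere S) := fun _ hg ↦
  mem_biUnion.2 ⟨_, mem_range_succ_iff.2 (wordLen_le_of_mem_pow hg),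
    mem_sphere.2 ⟨mem_pow_wordLen_of_mem_pow hg, rfl⟩⟩

theorem pairwiseDisjoint_sphere (s : Set ℕ) : s.PairwiseDisjoint (sphere S) :=
  fun _ _ _ _ hij ↦ disjoint_left.2 fun _ hi hj ↦
    hij ((mem_sphere.1 hi).2.symm.trans (mem_sphere.1 hj).2)

theorem sphere_nonempty_of_le (h : (sphere S n).Nonempty) (hmn : m ≤ n) :
    (sphere S m).Nonempty := by
  obtain ⟨g, hg⟩ := h
  obtain ⟨hg, hgn⟩ := mem_sphere.1 hg
  rw [← Nat.add_sub_cancel' hmn, pow_add, Finset.mem_mul] at hg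
  obtain ⟨a, ha, b, hb, rfl⟩ := hg
  refine ⟨a, mem_sphere.2 ⟨ha, le_antisymm (wordLen_le_of_mem_pow ha) ?_⟩⟩
  have : a * b ∈ S ^ (wordLen (S : Set G) a + (n - m)) :=
    pow_add S _ _ ▸ mul_mem_mul (mem_pow_wordLen_of_mem_pow ha) hb
  have := wordLen_le_of_mem_pow this
  omega

theorem sphere_nonempty_of_tendsto_average {f : G → ℝ} {L : ℝ} (hL : L ≠ 0)
    (h : Tendsto (fun n ↦ (∑ᶠ g ∈ {g | wordLen (S : Set G) g = n}, f g) /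
      ({g | wordLen (S : Set G) g = n}.ncard : ℝ)) atTop (𝓝 L)) (m : ℕ) :
    (sphere S m).Nonempty := by
  obtain ⟨n, hmn, hn⟩ := frequently_atTop.1 (h.eventually_ne hL).frequently m
  refine sphere_nonempty_of_le ?_ hmn
  rcases eq_or_ne n 0 with rfl | hn0
  · exact ⟨1, mem_sphere.2 ⟨by simp, wordLen_one⟩⟩
  rw [← coe_sphere hn0] at hn
  by_contra he
  simp [not_nonempty_iff_eq_empty.1 he] at hn

theorem pow_subset_pow_add_mul (h1 : 1 ∈ S ^ ρ) (k : ℕ) : S ^ m ⊆ S ^ (m + k * ρ) := by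
  rw [pow_add, mul_comm, pow_mul]
  exact subset_mul_left _ (one_mem_pow h1)

theorem le_card_pow_of_sphere_nonempty (hρ : ρ ≠ 0) (h1 : 1 ∈ S ^ ρ)
    (hsph : ∀ m, (sphere S m).Nonempty) (J : ℕ) : J ≤ #(S ^ (J * ρ)) := by
  choose w hw using fun i ↦ hsph (i * ρ)
  refine le_card_of_inj_on_range w (fun i hi ↦ ?_) (fun i _ j _ hij ↦ ?_)
  · have := pow_subset_pow_add_mul h1 (J - i) (mem_sphere.1 (hw i)).1
    rwa [← add_mul, Nat.add_sub_cancel' hi.le] at this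
  · have := (mem_sphere.1 (hw i)).2
    rw [hij, (mem_sphere.1 (hw j)).2] at this
    exact Nat.eq_of_mul_eq_mul_right (Nat.pos_of_ne_zero hρ) this.symm

theorem one_mem_pow_of_wordLen_eq_zero (h0 : ∀ g, wordLen (S : Set G) g = 0 → g = 1)
    {s : G} (hs : s ∈ S) : 1 ∈ S ^ (wordLen (S : Set G) s⁻¹ + 1) := by
  have hs' : s⁻¹ ∈ S ^ wordLen (S : Set G) s⁻¹ := by
    by_cases h : wordLen (S : Set G) s⁻¹ = 0
    · rw [h, h0 _ h]; simp
    · exact mem_pow_wordLen_of_ne_zero h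
  rw [pow_succ', ← mul_inv_cancel s]
  exact mul_mem_mul hs hs'

end WordLength

section RandomWalk

variable {G : Type*} [Group G] [MeasurableSpace G] [MeasurableSingletonClass G]

/-- Evenness of `μ^{*0} = δ₁` on `{g | wordLen S g = 0}` rules out the elements that get word
length `sInf ∅ = 0` because they are not products of elements of `S`. -/
theorem eq_one_of_wordLen_eq_zero {μ : Measure G} {S : Finset G}
    (heven : ∃ c, ∀ g : G, wordLen (S : Set G) g = 0 → convPow μ 0 {g} = c) {g : G}
    (hg : wordLen (S : Set G) g = 0) : g = 1 := by
  classical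
  obtain ⟨c, hc⟩ := heven
  by_contra h
  have := (hc g hg).trans (hc 1 wordLen_one).symm
  rw [convPow, Measure.dirac_apply_of_mem (Set.mem_singleton 1),
    Measure.dirac_apply' _ (measurableSet_singleton g),
    Set.indicator_of_notMem fun h' ↦ h (Set.mem_singleton_iff.1 h').symm] at this
  exact zero_ne_one this

theorem card_mul_lt_one_of_lt_measureReal {ν : Measure G} [IsProbabilityMeasure ν] {A : Finset G}
    (hA : A.Nonempty) {x : G} {c : ℝ} (h : ∀ y ∈ A, c < ν.real {y⁻¹ * x}) : #A * c < 1 := by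
  classical
  calc #A * c = ∑ y ∈ A, c := by rw [sum_const, nsmul_eq_mul]
    _ < ∑ y ∈ A, ν.real {y⁻¹ * x} := sum_lt_sum_of_nonempty hA h
    _ = ∑ z ∈ A.image (· ⁻¹ * x), ν.real {z} :=
        (sum_image (f := fun z ↦ ν.real {z}) fun _ _ _ _ h ↦
          inv_injective (mul_right_cancel h)).symm
    _ ≤ 1 := (sum_measureReal_singleton _).trans_le measureReal_le_one

variable [Countable G]

instance isProbabilityMeasure_convPow (μ : Measure G) [IsProbabilityMeasure μ] (n : ℕ) :
    IsProbabilityMeasure (convPow μ n) := by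
  induction n with
  | zero => rw [convPow]; infer_instance
  | succ n ih => rw [convPow]; infer_instance

theorem mconv_apply_singleton (α β : Measure G) (x : G) :
    (α ∗ₘ β) {x} = ∑' y, α {y} * β {y⁻¹ * x} := by
  rw [Measure.mconv, Measure.map_apply (by fun_prop) (measurableSet_singleton x),
    Measure.prod_apply (by measurability), lintegral_countable']
  refine tsum_congr fun y ↦ ?_
  have : Prod.mk y ⁻¹' ((fun p : G × G ↦ p.1 * p.2) ⁻¹' {x}) = {y⁻¹ * x} := by
    ext; simp [eq_inv_mul_iff_mul_eq]
  rw [this, mul_comm]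

theorem convPow_add (μ : Measure G) (n k : ℕ) :
    convPow μ (n + k) = convPow μ n ∗ₘ convPow μ k := by
  induction k with
  | zero => simp [convPow]
  | succ k ih => rw [← add_assoc, convPow, ih, convPow, Measure.mconv_assoc]

variable [DecidableEq G] {μ : Measure G} {S : Finset G} {g : G} {n : ℕ}

theorem convPow_apply_singleton_eq_zero (hμS : ∀ g ∉ S, μ {g} = 0) :
    ∀ {n : ℕ} {g : G}, g ∉ S ^ n → convPow μ n {g} = 0
  | 0, g, hg => by
    rw [convPow, Measure.dirac_apply' _ (measurableSet_singleton g),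
      Set.indicator_of_notMem fun h ↦ hg (by simp [Set.mem_singleton_iff.1 h])]
  | n + 1, g, hg => by
    refine (mconv_apply_singleton _ _ _).trans (ENNReal.tsum_eq_zero.2 fun y ↦ ?_)
    by_cases hy : y ∈ S ^ n
    · have : y⁻¹ * g ∉ S := fun hs ↦ hg (by simpa [pow_succ] using mul_mem_mul hy hs)
      rw [hμS _ this, mul_zero]
    · rw [convPow_apply_singleton_eq_zero hμS hy, zero_mul]

theorem convPow_apply_singleton_ne_zero (hSμ : ∀ s ∈ S, μ {s} ≠ 0) :
    ∀ {n : ℕ} {g : G}, g ∈ S ^ n → convPow μ n {g} ≠ 0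
  | 0, g, hg => by simp_all [convPow]
  | n + 1, _, hg => by
    rw [pow_succ, Finset.mem_mul] at hg
    obtain ⟨y, hy, s, hs, rfl⟩ := hg
    refine (mconv_apply_singleton _ _ _).trans_ne fun h ↦ ?_
    have := ENNReal.tsum_eq_zero.1 h y
    rw [inv_mul_cancel_left] at this
    exact mul_ne_zero (convPow_apply_singleton_ne_zero hSμ hy) (hSμ s hs) this

theorem ae_mem_pow (hμS : ∀ g ∉ S, μ {g} = 0) (n : ℕ) : ∀ᵐ g ∂convPow μ n, g ∈ S ^ n :=
  ae_iff_of_countable.2 fun _ hg ↦ by_contra fun h ↦ hg (convPow_apply_singleton_eq_zero hμS h)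

theorem convPow_real_singleton_eq_zero (hμS : ∀ g ∉ S, μ {g} = 0) (hg : g ∉ S ^ n) :
    (convPow μ n).real {g} = 0 := by
  rw [measureReal_def, convPow_apply_singleton_eq_zero hμS hg, ENNReal.toReal_zero]

variable [IsProbabilityMeasure μ]

theorem convPow_real_singleton_pos (hSμ : ∀ s ∈ S, μ {s} ≠ 0) (hg : g ∈ S ^ n) :
    0 < (convPow μ n).real {g} :=
  ENNReal.toReal_pos (convPow_apply_singleton_ne_zero hSμ hg) (measure_ne_top _ _)

theorem sum_convPow_real_singleton_eq_one (hμS : ∀ g ∉ S, μ {g} = 0) {A : Finset G}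
    (hA : S ^ n ⊆ A) : ∑ g ∈ A, (convPow μ n).real {g} = 1 := by
  rw [sum_measureReal_singleton, measureReal_def, ENNReal.toReal_eq_one_iff,
    ← mem_ae_iff_prob_eq_one (Set.toFinite _).measurableSet]
  exact (ae_mem_pow hμS n).mono fun _ hg ↦ hA hg

theorem convPow_add_real_singleton (hμS : ∀ g ∉ S, μ {g} = 0) (n k : ℕ) (x : G) :
    (convPow μ (n + k)).real {x} =
      ∑ y ∈ S ^ n, (convPow μ n).real {y} * (convPow μ k).real {y⁻¹ * x} := by
  rw [measureReal_def, convPow_add, mconv_apply_singleton, tsum_eq_sum fun y hy ↦ by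
    rw [convPow_apply_singleton_eq_zero hμS hy, zero_mul], ENNReal.toReal_sum fun _ _ ↦
    ENNReal.mul_ne_top (measure_ne_top _ _) (measure_ne_top _ _)]
  simp only [ENNReal.toReal_mul, measureReal_def]

theorem integral_convPow (hμS : ∀ g ∉ S, μ {g} = 0) (φ : G → ℝ) (n : ℕ) :
    ∫ g, φ g ∂convPow μ n = ∑ g ∈ S ^ n, (convPow μ n).real {g} * φ g := by
  calc ∫ g, φ g ∂convPow μ n = ∫ g in ↑(S ^ n), φ g ∂convPow μ n := by
        rw [Measure.restrict_eq_self_of_ae_mem (ae_mem_pow hμS n)]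
    _ = _ := setIntegral_finset _ IntegrableOn.finset

end RandomWalk

section Collision

variable {G : Type*} [Group G] [MeasurableSpace G] [DecidableEq G] {μ : Measure G}
  {S : Finset G}

def collisionProb (μ : Measure G) (S : Finset G) (n : ℕ) : ℝ :=
  ∑ x ∈ S ^ n, (convPow μ n).real {x} ^ 2

theorem collisionProb_nonneg (n : ℕ) : 0 ≤ collisionProb μ S n :=
  sum_nonneg fun _ _ ↦ sq_nonneg _

variable [Countable G] [MeasurableSingletonClass G] (hμS : ∀ g ∉ S, μ {g} = 0)
include hμS

theorem sum_convPow_real_inv_mul_sq {N k : ℕ} {y : G} (hy : y ∈ S ^ N) :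
    ∑ x ∈ S ^ (N + k), (convPow μ k).real {y⁻¹ * x} ^ 2 = collisionProb μ S k := by
  symm
  calc collisionProb μ S k
      = ∑ x ∈ (S ^ k).map (mulLeftEmbedding y), (convPow μ k).real {y⁻¹ * x} ^ 2 := by
        simp [collisionProb]
    _ = _ := by
      refine sum_subset (fun x hx ↦ ?_) fun x _ hx ↦ ?_
      · obtain ⟨z, hz, rfl⟩ := mem_map.1 hx
        exact pow_add S N k ▸ mul_mem_mul hy hz
      · rw [convPow_real_singleton_eq_zero hμS fun h ↦ hx (mem_map.2 ⟨_, h, by simp⟩), sq,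
          zero_mul]

variable [IsProbabilityMeasure μ]

theorem pow_nonempty_of_support (n : ℕ) : (S ^ n).Nonempty :=
  nonempty_of_sum_ne_zero ((sum_convPow_real_singleton_eq_one hμS le_rfl).trans_ne one_ne_zero)

theorem collisionProb_add_add_min_mul_le {N k : ℕ} {y₁ y₂ : G} (h₁ : y₁ ∈ S ^ N)
    (h₂ : y₂ ∈ S ^ N) :
    collisionProb μ S (N + k) + min ((convPow μ N).real {y₁}) ((convPow μ N).real {y₂}) / 2 *
      ∑ x ∈ S ^ (N + k), ((convPow μ k).real {y₁⁻¹ * x} - (convPow μ k).real {y₂⁻¹ * x}) ^ 2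
      ≤ collisionProb μ S k := by
  have hpoint : ∀ x, (convPow μ (N + k)).real {x} ^ 2 +
      min ((convPow μ N).real {y₁}) ((convPow μ N).real {y₂}) / 2 *
        ((convPow μ k).real {y₁⁻¹ * x} - (convPow μ k).real {y₂⁻¹ * x}) ^ 2
      ≤ ∑ y ∈ S ^ N, (convPow μ N).real {y} * (convPow μ k).real {y⁻¹ * x} ^ 2 := fun x ↦ by
    rw [convPow_add_real_singleton hμS]
    exact sq_sum_mul_add_min_mul_sq_sub_le (fun _ _ ↦ measureReal_nonneg)
      (sum_convPow_real_singleton_eq_one hμS le_rfl) h₁ h₂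
  calc _ = ∑ x ∈ S ^ (N + k), ((convPow μ (N + k)).real {x} ^ 2 +
        min ((convPow μ N).real {y₁}) ((convPow μ N).real {y₂}) / 2 *
          ((convPow μ k).real {y₁⁻¹ * x} - (convPow μ k).real {y₂⁻¹ * x}) ^ 2) := by
        rw [collisionProb, sum_add_distrib, mul_sum]
    _ ≤ ∑ x ∈ S ^ (N + k), ∑ y ∈ S ^ N,
          (convPow μ N).real {y} * (convPow μ k).real {y⁻¹ * x} ^ 2 :=
        sum_le_sum fun x _ ↦ hpoint x
    _ = ∑ y ∈ S ^ N, (convPow μ N).real {y} * collisionProb μ S k := by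
        rw [sum_comm]
        exact sum_congr rfl fun y hy ↦ by rw [← mul_sum, sum_convPow_real_inv_mul_sq hμS hy]
    _ = collisionProb μ S k := by
        rw [← sum_mul, sum_convPow_real_singleton_eq_one hμS le_rfl, one_mul]

theorem collisionProb_antitone : Antitone (collisionProb μ S) := by
  intro a b hab
  obtain ⟨N, rfl⟩ := Nat.exists_eq_add_of_le hab
  obtain ⟨y, hy⟩ := pow_nonempty_of_support hμS N
  have := collisionProb_add_add_min_mul_le hμS (k := a) hy hy
  simp only [sub_self, sq, mul_zero, sum_const_zero, add_zero] at this
  rwa [add_comm]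

theorem tendsto_collisionProb_iInf :
    Tendsto (collisionProb μ S) atTop (𝓝 (⨅ n, collisionProb μ S n)) :=
  tendsto_atTop_ciInf (collisionProb_antitone hμS)
    ⟨0, by rintro _ ⟨n, rfl⟩; exact collisionProb_nonneg n⟩

theorem exists_collisionProb_le (k : ℕ) : ∃ g, collisionProb μ S k ≤ (convPow μ k).real {g} := by
  obtain ⟨g, -, hmax⟩ := exists_max_image (S ^ k) (fun g ↦ (convPow μ k).real {g})
    (pow_nonempty_of_support hμS k)
  refine ⟨g, ?_⟩
  calc collisionProb μ S k = ∑ x ∈ S ^ k, (convPow μ k).real {x} * (convPow μ k).real {x} := by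
        simp only [collisionProb, sq]
    _ ≤ ∑ x ∈ S ^ k, (convPow μ k).real {g} * (convPow μ k).real {x} :=
        sum_le_sum fun x hx ↦ mul_le_mul_of_nonneg_right (hmax x hx) measureReal_nonneg
    _ = (convPow μ k).real {g} := by
        rw [← mul_sum, sum_convPow_real_singleton_eq_one hμS le_rfl, mul_one]

variable (hSμ : ∀ s ∈ S, μ {s} ≠ 0)
include hSμ

theorem tendsto_sum_sq_sub_translate {N : ℕ} {y₁ y₂ : G} (h₁ : y₁ ∈ S ^ N) (h₂ : y₂ ∈ S ^ N) :
    Tendsto (fun k ↦ ∑ x ∈ S ^ (N + k),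
      ((convPow μ k).real {y₁⁻¹ * x} - (convPow μ k).real {y₂⁻¹ * x}) ^ 2) atTop (𝓝 0) := by
  set m := min ((convPow μ N).real {y₁}) ((convPow μ N).real {y₂})
  have hm : 0 < m := lt_min (convPow_real_singleton_pos hSμ h₁) (convPow_real_singleton_pos hSμ h₂)
  have hF := tendsto_collisionProb_iInf hμS (μ := μ)
  have hgap : Tendsto (fun k ↦ (collisionProb μ S k - collisionProb μ S (N + k)) * (2 / m))
      atTop (𝓝 0) := by
    simpa using (hF.sub (hF.comp ((tendsto_add_atTop_nat N).congr fun k ↦ add_comm k N))).mul_const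
      (2 / m)
  refine squeeze_zero (fun _ ↦ sum_nonneg fun _ _ ↦ sq_nonneg _) (fun k ↦ ?_) hgap
  have := collisionProb_add_add_min_mul_le hμS (k := k) h₁ h₂
  calc _ = m / 2 * (∑ x ∈ S ^ (N + k),
        ((convPow μ k).real {y₁⁻¹ * x} - (convPow μ k).real {y₂⁻¹ * x}) ^ 2) * (2 / m) := by
        field_simp
    _ ≤ _ := by gcongr; linarith

theorem tendsto_collisionProb_zero (hcard : ∀ J : ℕ, ∃ N, J ≤ #(S ^ N)) :
    Tendsto (collisionProb μ S) atTop (𝓝 0) := by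
  suffices hΦ : ⨅ n, collisionProb μ S n = 0 from hΦ ▸ tendsto_collisionProb_iInf hμS
  set Φ := ⨅ n, collisionProb μ S n
  by_contra hΦ
  have hΦpos : 0 < Φ := (le_ciInf collisionProb_nonneg).lt_of_ne' hΦ
  obtain ⟨J, hJ⟩ := exists_nat_gt (2 / Φ)
  obtain ⟨N, hN⟩ := hcard J
  obtain ⟨y₀, hy₀⟩ := pow_nonempty_of_support hμS N
  obtain ⟨k, hk⟩ := ((eventually_all_finset (S ^ N)).2 fun y hy ↦
    (tendsto_sum_sq_sub_translate hμS hSμ hy hy₀).eventually_lt_const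
      (by positivity : 0 < (Φ / 2) ^ 2)).exists
  obtain ⟨g, hg⟩ := exists_collisionProb_le hμS k
  have hΦg : Φ ≤ (convPow μ k).real {g} :=
    (ciInf_le ⟨0, by rintro _ ⟨n, rfl⟩; exact collisionProb_nonneg n⟩ k).trans hg
  have hgk : g ∈ S ^ k := by
    by_contra h
    rw [convPow_real_singleton_eq_zero hμS h] at hΦg
    exact hΦpos.not_ge hΦg
  have hclose : ∀ y ∈ S ^ N, Φ / 2 < (convPow μ k).real {y⁻¹ * (y₀ * g)} := fun y hy ↦ by
    have := (single_le_sum (fun _ _ ↦ sq_nonneg _)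
      (pow_add S N k ▸ mul_mem_mul hy₀ hgk)).trans_lt (hk y hy)
    rw [inv_mul_cancel_left] at this
    nlinarith
  have hmass := card_mul_lt_one_of_lt_measureReal ⟨y₀, hy₀⟩ hclose
  have hJN : (J : ℝ) * (Φ / 2) ≤ #(S ^ N) * (Φ / 2) := by gcongr
  rw [div_lt_iff₀ hΦpos] at hJ
  linarith

theorem tendsto_convPow_real_singleton_zero (hcard : ∀ J : ℕ, ∃ N, J ≤ #(S ^ N)) (g : G) :
    Tendsto (fun n ↦ (convPow μ n).real {g}) atTop (𝓝 0) := by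
  refine squeeze_zero (fun _ ↦ measureReal_nonneg) (fun n ↦ ?_)
    (by simpa using (tendsto_collisionProb_zero hμS hSμ hcard).sqrt)
  refine Real.le_sqrt_of_sq_le ?_
  by_cases hg : g ∈ S ^ n
  · exact single_le_sum (f := fun x ↦ (convPow μ n).real {x} ^ 2) (fun _ _ ↦ sq_nonneg _) hg
  · rw [convPow_real_singleton_eq_zero hμS hg, sq, zero_mul]
    exact collisionProb_nonneg n

end Collision

section Integral

variable {G : Type*} [Group G] [Countable G] [MeasurableSpace G] [MeasurableSingletonClass G]

theorem integral_actConv_dirac {X : Type*} [MeasurableSpace X] [MulAction G X]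
    (hX : ∀ g : G, Measurable fun x : X ↦ g • x) (ν : Measure G) (x : X) {f : X → ℝ}
    (hf : AEStronglyMeasurable f (ν.map (· • x))) :
    ∫ y, f y ∂actConv ν (Measure.dirac x) = ∫ g, f (g • x) ∂ν := by
  rw [actConv, Measure.prod_dirac, Measure.map_map (measurable_from_prod_countable_right hX)
    (by fun_prop)]
  exact integral_map (measurable_of_countable _).aemeasurable hf

variable [DecidableEq G] {μ : Measure G} [IsProbabilityMeasure μ] {S : Finset G}

theorem integral_convPow_eq_sum_sphere {n : ℕ} (hμS : ∀ g ∉ S, μ {g} = 0)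
    (heven : ∀ m, ∃ c, ∀ g : G, wordLen (S : Set G) g = m → convPow μ n {g} = c) (φ : G → ℝ) :
    ∫ g, φ g ∂convPow μ n = ∑ m ∈ range (n + 1),
      (∑ g ∈ sphere S m, (convPow μ n).real {g}) * ((∑ g ∈ sphere S m, φ g) / #(sphere S m)) := by
  rw [integral_convPow hμS, sum_subset pow_subset_biUnion_sphere fun g _ hg ↦ by
    rw [convPow_real_singleton_eq_zero hμS hg, zero_mul], sum_biUnion (pairwiseDisjoint_sphere _)]
  refine sum_congr rfl fun m _ ↦ sum_mul_eq_sum_mul_sum_div_card fun g hg g' hg' ↦ ?_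
  obtain ⟨c, hc⟩ := heven m
  rw [measureReal_def, measureReal_def, hc g (mem_sphere.1 hg).2, hc g' (mem_sphere.1 hg').2]

end Integral

end RWalk

theorem conv_dirac_tendsto_general {G : Type*} [Group G] [Countable G] [MeasurableSpace G]
    [MeasurableSingletonClass G]
    {X : Type*} [MetricSpace X] [MeasurableSpace X] [BorelSpace X]
    [MulAction G X] (hcont : ∀ g : G, Continuous fun x : X => g • x)
    (μ : Measure G) [IsProbabilityMeasure μ]
    (S : Finset G) (hsupp : ∀ g : G, μ {g} ≠ 0 ↔ g ∈ S)
    (heven : ∀ n m : ℕ, ∃ cnm : ENNReal,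
      ∀ g : G, wordLen (S : Set G) g = m → convPow μ n {g} = cnm)
    (ν : Measure X) [IsProbabilityMeasure ν]
    (hword : ∀ f : X → ℝ, Continuous f → ∀ x : X,
      Tendsto
        (fun n : ℕ =>
          (∑ᶠ g ∈ {g : G | wordLen (S : Set G) g = n}, f (g • x)) /
            (({g : G | wordLen (S : Set G) g = n}).ncard : ℝ))
        atTop (𝓝 (∫ y, f y ∂ν))) :
    ∀ x : X, ∀ f : X → ℝ, Continuous f →
      Tendsto (fun n : ℕ => ∫ y, f y ∂(actConv (convPow μ n) (Measure.dirac x)))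
        atTop (𝓝 (∫ y, f y ∂ν)) := by
  classical
  intro x f hf
  have hμS : ∀ g ∉ S, μ {g} = 0 := fun g hg ↦ not_not.1 (mt (hsupp g).1 hg)
  have hSμ : ∀ s ∈ S, μ {s} ≠ 0 := fun s hs ↦ (hsupp s).2 hs
  have hsph : ∀ m, (sphere S m).Nonempty :=
    sphere_nonempty_of_tendsto_average (by simp) (hword (fun _ ↦ 1) continuous_const x)
  obtain ⟨s, hs⟩ : S.Nonempty := by simpa using pow_nonempty_of_support hμS (μ := μ) 1
  have h1 := one_mem_pow_of_wordLen_eq_zero (fun _ ↦ eq_one_of_wordLen_eq_zero (heven 0 0)) hs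
  have hcard : ∀ J, ∃ N, J ≤ #(S ^ N) :=
    fun J ↦ ⟨_, le_card_pow_of_sphere_nonempty (Nat.succ_ne_zero _) h1 hsph J⟩
  have havg : Tendsto (fun m ↦ (∑ g ∈ sphere S m, f (g • x)) / #(sphere S m)) atTop
      (𝓝 (∫ y, f y ∂ν)) := (hword f hf x).congr' <| (eventually_ne_atTop 0).mono fun m hm ↦ by
    rw [← coe_sphere hm, finsum_mem_coe_finset, Set.ncard_coe_finset]
  simp_rw [integral_actConv_dirac (fun g ↦ (hcont g).measurable) _ x hf.aestronglyMeasurable,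
    integral_convPow_eq_sum_sphere hμS (heven _)]
  refine tendsto_sum_range_mul_of_tendsto (fun _ _ ↦ sum_nonneg fun _ _ ↦ measureReal_nonneg)
    (fun n ↦ ?_) (fun m ↦ ?_) havg
  · rw [← sum_biUnion (pairwiseDisjoint_sphere _)]
    exact sum_convPow_real_singleton_eq_one hμS pow_subset_biUnion_sphere
  · simpa using tendsto_finsetSum _ fun g _ ↦ tendsto_convPow_real_singleton_zero hμS hSμ hcard g

/-- **Lemma (convergence of the random walk from a point mass).** Let `G` be a countable
group acting continuously on a compact metric space `X`, and `μ` a probability measure on `G`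
whose support `S` is finite and generates `G`.  If `μ` is evenly distributed and the
`G`-action converges in word metric to the space average of a Borel probability measure `ν`,
then for every `x ∈ X` the measures `μ^{*n} * δ_x` converge weak-* to `ν`. -/
theorem conv_dirac_tendsto {G : Type*} [Group G] [Countable G] [MeasurableSpace G]
    [MeasurableSingletonClass G]
    {X : Type*} [MetricSpace X] [CompactSpace X] [MeasurableSpace X] [BorelSpace X]
    [MulAction G X] (hcont : ∀ g : G, Continuous fun x : X => g • x)
    (μ : Measure G) [IsProbabilityMeasure μ]
    (S : Finset G) (hsupp : ∀ g : G, μ {g} ≠ 0 ↔ g ∈ S)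
    (hgen : Subgroup.closure (S : Set G) = ⊤)
    (heven : ∀ n m : ℕ, ∃ cnm : ENNReal,
      ∀ g : G, wordLen (S : Set G) g = m → convPow μ n {g} = cnm)
    (ν : Measure X) [IsProbabilityMeasure ν]
    (hword : ∀ f : X → ℝ, Continuous f → ∀ x : X,
      Tendsto
        (fun n : ℕ =>
          (∑ᶠ g ∈ {g : G | wordLen (S : Set G) g = n}, f (g • x)) /
            (({g : G | wordLen (S : Set G) g = n}).ncard : ℝ))
        atTop (𝓝 (∫ y, f y ∂ν))) :
    ∀ x : X, ∀ f : X → ℝ, Continuous f →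
      Tendsto (fun n : ℕ => ∫ y, f y ∂(actConv (convPow μ n) (Measure.dirac x)))
        atTop (𝓝 (∫ y, f y ∂ν)) :=
  conv_dirac_tendsto_general hcont μ S hsupp heven ν hword
end
end

section
/- For g, h in the Farey group Γ, write Δ_g for the image of the set {0, 1, ∞} under the Möbius transformation g. Then Δ_g and Δ_h are neighboring tiles of the Farey tessellation — i.e. Δ_g ≠ Δ_h and |Δ_g ∩ Δ_h| = 2 — if and only if h = gs for some s ∈ {a, b, c}. -/
open scoped MatrixGroups OnePoint
open Matrix MeasureTheory Filter Topology

noncomputable section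

namespace Farey

/-- Möbius action of a real 2×2 matrix on `ℝ ∪ {∞}`. -/
def mobAux (M : Matrix (Fin 2) (Fin 2) ℝ) : OnePoint ℝ → OnePoint ℝ :=
  OnePoint.rec (if M 1 0 = 0 then ∞ else ((M 0 0 / M 1 0 : ℝ) : OnePoint ℝ))
    (fun r => if M 1 0 * r + M 1 1 = 0 then ∞
      else (((M 0 0 * r + M 0 1) / (M 1 0 * r + M 1 1) : ℝ) : OnePoint ℝ))

@[simp] lemma mobAux_infty (M : Matrix (Fin 2) (Fin 2) ℝ) :
    mobAux M ∞ = if M 1 0 = 0 then ∞ else ((M 0 0 / M 1 0 : ℝ) : OnePoint ℝ) := rfl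

@[simp] lemma mobAux_coe (M : Matrix (Fin 2) (Fin 2) ℝ) (r : ℝ) :
    mobAux M (r : OnePoint ℝ) = if M 1 0 * r + M 1 1 = 0 then ∞
      else (((M 0 0 * r + M 0 1) / (M 1 0 * r + M 1 1) : ℝ) : OnePoint ℝ) := rfl

lemma mobAux_neg (M : Matrix (Fin 2) (Fin 2) ℝ) : mobAux (-M) = mobAux M := by
  funext x
  induction x using OnePoint.rec with
  | infty => simp [Matrix.neg_apply, neg_eq_zero, neg_div_neg_eq]
  | coe r =>
      rw [mobAux_coe, mobAux_coe]
      have h1 : (-M) 1 0 * r + (-M) 1 1 = -(M 1 0 * r + M 1 1) := by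
        simp [Matrix.neg_apply]; ring
      have h0 : (-M) 0 0 * r + (-M) 0 1 = -(M 0 0 * r + M 0 1) := by
        simp [Matrix.neg_apply]; ring
      rw [h1, h0]
      simp only [neg_eq_zero, neg_div_neg_eq]

end Farey

namespace Farey

/-- Möbius action of an integral 2×2 special linear matrix on `ℝ ∪ {∞}`. -/
def mobSL (g : SL(2, ℤ)) : OnePoint ℝ → OnePoint ℝ :=
  mobAux ((g : Matrix (Fin 2) (Fin 2) ℤ).map (Int.cast : ℤ → ℝ))

lemma mobSL_mul_center (g z : SL(2, ℤ)) (hz : z ∈ Subgroup.center SL(2, ℤ)) :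
    mobSL (g * z) = mobSL g := by
  obtain ⟨r, hr, hscalar⟩ := Matrix.SpecialLinearGroup.mem_center_iff.mp hz
  have hr' : r = 1 ∨ r = -1 := by
    have : IsUnit r := IsUnit.of_mul_eq_one (a := r) (r ^ 1) (by
      simpa [pow_succ, Fintype.card_fin] using hr)
    exact Int.isUnit_iff.mp this
  rcases hr' with h1 | h1
  · have : z = 1 := by
      ext i j
      have := congrFun (congrFun hscalar i) j
      simp [h1] at this
      simp [← this]
    simp [this]
  · have hzmat : (z : Matrix (Fin 2) (Fin 2) ℤ) = -1 := by
      ext i j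
      have := congrFun (congrFun hscalar i) j
      simp [h1] at this
      simp [← this]
    unfold mobSL
    have : ((g * z : SL(2,ℤ)) : Matrix (Fin 2) (Fin 2) ℤ) = -(g : Matrix (Fin 2) (Fin 2) ℤ) := by
      rw [Matrix.SpecialLinearGroup.coe_mul, hzmat]
      simp
    rw [this]
    have hmap : ((-(g : Matrix (Fin 2) (Fin 2) ℤ)).map (Int.cast : ℤ → ℝ))
        = -(((g : Matrix (Fin 2) (Fin 2) ℤ)).map (Int.cast : ℤ → ℝ)) := by
      ext i j
      simp
    rw [hmap, mobAux_neg]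

/-- Möbius action of an element of `PSL(2,ℤ)` on `ℝ ∪ {∞}`. -/
def mob (x : PSL(2, ℤ)) : OnePoint ℝ → OnePoint ℝ :=
  Quotient.liftOn' x mobSL (by
    intro g h hgh
    have hmem : g⁻¹ * h ∈ Subgroup.center SL(2, ℤ) := QuotientGroup.leftRel_apply.mp hgh
    have : h = g * (g⁻¹ * h) := by group
    rw [this, mobSL_mul_center g _ hmem])

end Farey

namespace Farey

/-- The matrix `A = [[1,-2],[1,-1]]` as an element of `SL(2,ℤ)`. -/
def A : SL(2, ℤ) := ⟨!![1, -2; 1, -1], by norm_num [Matrix.det_fin_two_of]⟩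

/-- The matrix `B = [[0,-1],[1,0]]` as an element of `SL(2,ℤ)`. -/
def B : SL(2, ℤ) := ⟨!![0, -1; 1, 0], by norm_num [Matrix.det_fin_two_of]⟩

/-- The matrix `C = [[1,-1],[2,-1]]` as an element of `SL(2,ℤ)`. -/
def C : SL(2, ℤ) := ⟨!![1, -1; 2, -1], by norm_num [Matrix.det_fin_two_of]⟩

/-- The element `a ∈ PSL(2,ℤ)`. -/
def a : PSL(2, ℤ) := QuotientGroup.mk A

/-- The element `b ∈ PSL(2,ℤ)`. -/
def b : PSL(2, ℤ) := QuotientGroup.mk B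

/-- The element `c ∈ PSL(2,ℤ)`. -/
def c : PSL(2, ℤ) := QuotientGroup.mk C

/-- The Farey group: the subgroup of `PSL(2,ℤ)` generated by `a`, `b`, `c`. -/
def fareyGroup : Subgroup PSL(2, ℤ) := Subgroup.closure {a, b, c}

/-- The word length of an element of `PSL(2,ℤ)` with respect to the generators
`a`, `b`, `c` of the Farey group. -/
def wordLength (x : PSL(2, ℤ)) : ℕ :=
  sInf {n | ∃ l : List PSL(2, ℤ), l.length = n ∧ (∀ s ∈ l, s = a ∨ s = b ∨ s = c) ∧ l.prod = x}

/-- The sphere of radius `n` in the Farey group for the word metric w.r.t. `{a,b,c}`. -/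
def sphere (n : ℕ) : Set PSL(2, ℤ) := {x | x ∈ fareyGroup ∧ wordLength x = n}

end Farey

namespace Farey

/-- The mediant of two rationals, `p₁/q₁ ⊕ p₂/q₂ = (p₁+p₂)/(q₁+q₂)` (in lowest terms). -/
def mediant (p q : ℚ) : ℚ := ((p.num + q.num : ℤ) : ℚ) / (((p.den : ℤ) + (q.den : ℤ) : ℤ) : ℚ)

/-- Insert the mediant between every two consecutive entries of a list of rationals. -/
def insertMediants : List ℚ → List ℚ
  | p :: q :: rest => p :: mediant p q :: insertMediants (q :: rest)
  | l => l

/-- The Farey sequences: `F_0 = (0,1)`, and `F_{n+1}` is obtained from `F_n` by inserting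
mediants between consecutive terms. -/
def fareySeq : ℕ → List ℚ
  | 0 => [0, 1]
  | n + 1 => insertMediants (fareySeq n)

/-- `p, q` are consecutive terms of the Farey sequence `F_n`. -/
def IsFareyPairIn (n : ℕ) (p q : ℚ) : Prop :=
  ∃ i : ℕ, (fareySeq n)[i]? = some p ∧ (fareySeq n)[i + 1]? = some q

/-- `p, q` form a Farey pair: they are consecutive terms of some Farey sequence. -/
def IsFareyPair (p q : ℚ) : Prop := ∃ n : ℕ, IsFareyPairIn n p q

/-- The `k`-th summand (`k = 0, 1, 2, …`) in the series defining Minkowski's question mark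
function: `(−1)^k 2^{−(a₁+⋯+a_{k+1})}` when the continued fraction expansion
`x = [a₀; a₁, a₂, …]` has at least `k+1` partial denominators and `0` otherwise. -/
def qmTerm (x : ℝ) (k : ℕ) : ℝ :=
  match (List.range (k + 1)).mapM (fun i => (GenContFract.of x).partDens.get? i) with
  | none => 0
  | some l => (-1 : ℝ) ^ k * (2 : ℝ) ^ (-(l.sum))

/-- Minkowski's question mark function on `[0,1]`:
`?(x) = 2 ∑_{k≥1} (−1)^{k+1} 2^{−(a₁+⋯+a_k)}` for `x = [0; a₁, a₂, …]`, `?(1) = 1`. -/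
def questionMark (x : ℝ) : ℝ := if x = 1 then 1 else 2 * ∑' k : ℕ, qmTerm x k

/-- The extended Minkowski function `M̄(q) = (1/3)(∑_{k=−∞}^{m−1} 2^{−|k|} + ?(q−m)·2^{−|m|})`
for `q ∈ [m, m+1]`. -/
def extM (q : ℝ) : ℝ :=
  (1 / 3) * ((∑' j : ℕ, (2 : ℝ) ^ (-|⌊q⌋ - 1 - (j : ℤ)|)) +
    questionMark (q - ⌊q⌋) * (2 : ℝ) ^ (-|⌊q⌋|))

instance : MeasurableSpace (OnePoint ℝ) := borel _
instance : BorelSpace (OnePoint ℝ) := ⟨rfl⟩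

/-- `μ` is the extended Minkowski measure: the Borel probability measure on `ℝ ∪ {∞}` giving
no mass to `{∞}` whose cumulative distribution function is the extended Minkowski function. -/
def IsExtMinkowskiMeasure (μ : Measure (OnePoint ℝ)) : Prop :=
  IsProbabilityMeasure μ ∧ μ {∞} = 0 ∧
    ∀ u v : ℝ, u ≤ v →
      μ ((fun r : ℝ => (r : OnePoint ℝ)) '' Set.Ico u v) = ENNReal.ofReal (extM v - extM u)

end Farey

/-!
Since `mob g` is injective, `Δ_g` and `Δ_h` are neighbours exactly when the base tile
`Δ = {0, 1, ∞}` and `Δ_x`, `x = g⁻¹h`, are, i.e. when exactly one vertex of `Δ` is sent out of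
`Δ` by `x`. Composing `x` with a power of the rotation `t : 0 ↦ ∞ ↦ 1 ↦ 0` of `Δ` moves that
vertex to `1`, and a computation with integer matrices of determinant one shows that the elements
sending `0, ∞` into `Δ` and `1` out of it are exactly `a t`, `b` and `c t²`. Finally, reduction
mod 3 gives a character `PSL(2, ℤ) → ℤ/3` which kills the involutions `a, b, c`, hence `Γ`,
but not `t`; this pins down the power of `t` and leaves `x ∈ {a, b, c}`.
-/

namespace Farey

def slToGL : SL(2, ℤ) →* GL (Fin 2) ℝ :=
  Matrix.SpecialLinearGroup.toGL.comp (Matrix.SpecialLinearGroup.map (Int.castRingHom ℝ))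

lemma mobAux_eq_smul (g : GL (Fin 2) ℝ) : mobAux g = (g • ·) := by
  funext x
  induction x using OnePoint.rec with
  | infty => simp [OnePoint.smul_infty_eq_ite]
  | coe r => simp [OnePoint.smul_some_eq_ite]

lemma mob_coe (g : SL(2, ℤ)) : mob (g : PSL(2, ℤ)) = (slToGL g • ·) :=
  mobAux_eq_smul (slToGL g)

lemma mob_one : mob 1 = id := by
  rw [← QuotientGroup.mk_one, mob_coe, map_one]
  exact funext (one_smul _)

lemma mob_mul (x y : PSL(2, ℤ)) : mob (x * y) = mob x ∘ mob y := by
  induction x using QuotientGroup.induction_on with | H g =>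
  induction y using QuotientGroup.induction_on with | H h =>
  rw [← QuotientGroup.mk_mul, mob_coe, mob_coe, mob_coe, map_mul]
  exact funext (mul_smul _ _)

lemma mob_bijective (x : PSL(2, ℤ)) : (mob x).Bijective := by
  induction x using QuotientGroup.induction_on with | H g =>
  rw [mob_coe]
  exact MulAction.bijective _

def ratPoint (p q : ℤ) : OnePoint ℝ := if q = 0 then ∞ else ((p / q : ℝ) : OnePoint ℝ)

lemma mob_coe_zero (g : SL(2, ℤ)) :
    mob (g : PSL(2, ℤ)) ((0 : ℝ) : OnePoint ℝ) = ratPoint (g 0 1) (g 1 1) := by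
  simp [mob, mobSL, ratPoint]

lemma mob_coe_one (g : SL(2, ℤ)) :
    mob (g : PSL(2, ℤ)) ((1 : ℝ) : OnePoint ℝ) = ratPoint (g 0 0 + g 0 1) (g 1 0 + g 1 1) := by
  simp [mob, mobSL, ratPoint]
  norm_cast

lemma mob_coe_infty (g : SL(2, ℤ)) : mob (g : PSL(2, ℤ)) ∞ = ratPoint (g 0 0) (g 1 0) := by
  simp [mob, mobSL, ratPoint]

def baseTile : Set (OnePoint ℝ) := {((0 : ℝ) : OnePoint ℝ), ((1 : ℝ) : OnePoint ℝ), ∞}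

@[simp] lemma zero_mem_baseTile : ((0 : ℝ) : OnePoint ℝ) ∈ baseTile := by simp [baseTile]

@[simp] lemma one_mem_baseTile : ((1 : ℝ) : OnePoint ℝ) ∈ baseTile := by simp [baseTile]

@[simp] lemma infty_mem_baseTile : ∞ ∈ baseTile := by simp [baseTile]

lemma baseTile_finite : baseTile.Finite := by
  simp [baseTile]

lemma ncard_baseTile : baseTile.ncard = 3 := by
  rw [baseTile, Set.ncard_eq_three]
  exact ⟨_, _, _, by simp, OnePoint.coe_ne_infty _, OnePoint.coe_ne_infty _, rfl⟩

lemma ratPoint_mem_baseTile_iff (p q : ℤ) :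
    ratPoint p q ∈ baseTile ↔ p = 0 ∨ p = q ∨ q = 0 := by
  by_cases hq : q = 0
  · simp [ratPoint, baseTile, hq]
  · have hq' : (q : ℝ) ≠ 0 := by exact_mod_cast hq
    simp [ratPoint, baseTile, hq, div_eq_iff hq']

def tile (g : PSL(2, ℤ)) : Set (OnePoint ℝ) := mob g '' baseTile

lemma tile_mul (g x : PSL(2, ℤ)) : tile (g * x) = mob g '' tile x := by
  rw [tile, tile, mob_mul, Set.image_comp]

def AreNeighbors {α : Type*} (S T : Set α) : Prop := S ≠ T ∧ (S ∩ T).ncard = 2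

lemma areNeighbors_image_iff {α β : Type*} {f : α → β} (hf : f.Injective) {S T : Set α} :
    AreNeighbors (f '' S) (f '' T) ↔ AreNeighbors S T := by
  rw [AreNeighbors, AreNeighbors, (Set.image_injective.mpr hf).ne_iff, ← Set.image_inter hf,
    Set.ncard_image_of_injective _ hf]

lemma areNeighbors_baseTile_tile_iff_ncard (x : PSL(2, ℤ)) :
    AreNeighbors baseTile (tile x) ↔ (baseTile \ mob x ⁻¹' baseTile).ncard = 1 := by
  have hinter : (baseTile ∩ tile x).ncard = (baseTile ∩ mob x ⁻¹' baseTile).ncard := by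
    rw [tile, Set.inter_comm, ← Set.image_inter_preimage,
      Set.ncard_image_of_injective _ (mob_bijective x).1]
  have hsplit := Set.ncard_inter_add_ncard_sdiff_eq_ncard baseTile (mob x ⁻¹' baseTile)
    baseTile_finite
  rw [ncard_baseTile] at hsplit
  refine ⟨fun h => by rw [h.2] at hinter; omega, fun h => ⟨fun heq => ?_, by omega⟩⟩
  rw [← heq, Set.inter_self, ncard_baseTile] at hinter
  omega

def T : SL(2, ℤ) := ⟨!![1, -1; 1, 0], by norm_num [Matrix.det_fin_two_of]⟩

def t : PSL(2, ℤ) := T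

lemma mob_t_zero : mob t ((0 : ℝ) : OnePoint ℝ) = ∞ := by
  rw [t, mob_coe_zero]
  simp [ratPoint, T]

lemma mob_t_one : mob t ((1 : ℝ) : OnePoint ℝ) = ((0 : ℝ) : OnePoint ℝ) := by
  rw [t, mob_coe_one]
  simp [ratPoint, T]

lemma mob_t_infty : mob t ∞ = ((1 : ℝ) : OnePoint ℝ) := by
  rw [t, mob_coe_infty]
  simp [ratPoint, T]

lemma preimage_mob_pow_t_baseTile (k : ℕ) : mob (t ^ k) ⁻¹' baseTile = baseTile := by
  have himage : mob t '' baseTile = baseTile := by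
    simp only [baseTile, Set.image_insert_eq, Set.image_singleton, mob_t_zero, mob_t_one,
      mob_t_infty]
    grind
  have hpreimage : mob t ⁻¹' baseTile = baseTile := by
    conv_lhs => rw [← himage]
    exact (mob_bijective t).1.preimage_image _
  induction k with
  | zero => rw [pow_zero, mob_one, Set.preimage_id]
  | succ k ih => rw [pow_succ, mob_mul, Set.preimage_comp, ih, hpreimage]

lemma diff_preimage_mob_mul_pow_t (x : PSL(2, ℤ)) (k : ℕ) :
    baseTile \ mob (x * t ^ k) ⁻¹' baseTile =
      mob (t ^ k) ⁻¹' (baseTile \ mob x ⁻¹' baseTile) := by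
  rw [Set.preimage_sdiff, preimage_mob_pow_t_baseTile, mob_mul, Set.preimage_comp]

lemma exists_mob_pow_t_one_eq {v : OnePoint ℝ} (hv : v ∈ baseTile) :
    ∃ k < 3, mob (t ^ k) ((1 : ℝ) : OnePoint ℝ) = v := by
  rcases hv with rfl | rfl | rfl
  · exact ⟨1, by norm_num, by rw [pow_one, mob_t_one]⟩
  · exact ⟨0, by norm_num, by rw [pow_zero, mob_one, id]⟩
  · exact ⟨2, by norm_num, by rw [pow_two, mob_mul, Function.comp_apply, mob_t_one, mob_t_zero]⟩

lemma ncard_diff_preimage_eq_one_iff_exists_pow_t (x : PSL(2, ℤ)) :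
    (baseTile \ mob x ⁻¹' baseTile).ncard = 1 ↔
      ∃ k < 3, baseTile \ mob (x * t ^ k) ⁻¹' baseTile = {((1 : ℝ) : OnePoint ℝ)} := by
  constructor
  · intro h
    obtain ⟨v, hv⟩ := Set.ncard_eq_one.mp h
    obtain ⟨k, hk, rfl⟩ := exists_mob_pow_t_one_eq (hv.symm.subset rfl).1
    refine ⟨k, hk, ?_⟩
    rw [diff_preimage_mob_mul_pow_t, hv, ← Set.image_singleton,
      (mob_bijective _).1.preimage_image]
  · rintro ⟨k, -, hk⟩
    have := congrArg Set.ncard hk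
    rwa [diff_preimage_mob_mul_pow_t, Set.ncard_singleton,
      Set.ncard_preimage_of_injective_subset_range (mob_bijective _).1
        fun z _ => (mob_bijective _).2 z] at this

lemma diff_preimage_baseTile_eq_one_iff (f : OnePoint ℝ → OnePoint ℝ) :
    baseTile \ f ⁻¹' baseTile = {((1 : ℝ) : OnePoint ℝ)} ↔
      f ((0 : ℝ) : OnePoint ℝ) ∈ baseTile ∧ f ((1 : ℝ) : OnePoint ℝ) ∉ baseTile ∧
        f ∞ ∈ baseTile := by
  simp only [Set.ext_iff, Set.mem_sdiff, Set.mem_preimage, Set.mem_singleton_iff]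
  constructor
  · intro h
    have h0 := h ((0 : ℝ) : OnePoint ℝ)
    have h1 := h ((1 : ℝ) : OnePoint ℝ)
    have hinf := h ∞
    simp at h0 h1 hinf
    exact ⟨h0, h1, hinf⟩
  · rintro ⟨h0, h1, hinf⟩ w
    constructor
    · rintro ⟨hw | hw | hw, hfw⟩ <;> subst hw <;> simp_all
    · rintro rfl
      exact ⟨one_mem_baseTile, h1⟩

lemma entries_eq_of_det_eq_one {p q r s : ℤ} (hdet : p * s - q * r = 1)
    (h0 : q = 0 ∨ q = s ∨ s = 0) (h1 : ¬(p + q = 0 ∨ p + q = r + s ∨ r + s = 0))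
    (hinf : p = 0 ∨ p = r ∨ r = 0) :
    ∃ ε : ℤ, (ε = 1 ∨ ε = -1) ∧
      ((p = -ε ∧ q = -ε ∧ r = 0 ∧ s = -ε) ∨ (p = 0 ∧ q = -ε ∧ r = ε ∧ s = 0) ∨
        (p = -ε ∧ q = 0 ∧ r = -ε ∧ s = -ε)) := by
  have unit {x y : ℤ} (h : x * y = 1) : ∃ ε : ℤ, (ε = 1 ∨ ε = -1) ∧ x = ε ∧ y = ε := by
    rcases Int.eq_one_or_neg_one_of_mul_eq_one' h with ⟨rfl, rfl⟩ | ⟨rfl, rfl⟩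
    exacts [⟨1, .inl rfl, rfl, rfl⟩, ⟨-1, .inr rfl, rfl, rfl⟩]
  rcases hinf with rfl | rfl | rfl <;> rcases h0 with rfl | rfl | rfl
  · linarith
  · obtain ⟨ε, -, hq, hr⟩ := unit (by linarith : -q * r = 1)
    omega
  · obtain ⟨ε, hε, hq, hr⟩ := unit (by linarith : -q * r = 1)
    exact ⟨ε, hε, by omega⟩
  · obtain ⟨ε, hε, hp, hs⟩ := unit (by linarith : p * s = 1)
    exact ⟨-ε, by omega, by omega⟩
  · linarith
  · obtain ⟨ε, -, hq, hp⟩ := unit (by linarith : -q * p = 1)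
    omega
  · obtain ⟨ε, -, hp, hs⟩ := unit (by linarith : p * s = 1)
    omega
  · obtain ⟨ε, hε, hp, hq⟩ := unit (by linarith : p * q = 1)
    exact ⟨-ε, by omega, by omega⟩
  · linarith

lemma mk_neg (g : SL(2, ℤ)) : ((-g : SL(2, ℤ)) : PSL(2, ℤ)) = g := by
  have hcenter : (-1 : SL(2, ℤ)) ∈ Subgroup.center SL(2, ℤ) :=
    Subgroup.mem_center_iff.mpr fun h => by rw [mul_neg_one, neg_one_mul]
  rw [← mul_neg_one, QuotientGroup.mk_mul, (QuotientGroup.eq_one_iff _).mpr hcenter, mul_one]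

lemma mk_eq_mk_of_eq_unit_mul {M N : SL(2, ℤ)} {ε : ℤ} (hε : ε = 1 ∨ ε = -1)
    (h : ∀ i j, M i j = ε * N i j) : (M : PSL(2, ℤ)) = N := by
  rcases hε with rfl | rfl
  · exact congrArg _ (Matrix.SpecialLinearGroup.ext _ _ fun i j => by simpa using h i j)
  · rw [← mk_neg N]
    exact congrArg _ (Matrix.SpecialLinearGroup.ext _ _ fun i j => by simpa using h i j)

lemma coe_A_mul_T : ((A * T : SL(2, ℤ)) : Matrix (Fin 2) (Fin 2) ℤ) = !![-1, -1; 0, -1] := by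
  decide

lemma coe_B : (B : Matrix (Fin 2) (Fin 2) ℤ) = !![0, -1; 1, 0] := rfl

lemma coe_C_mul_T_sq : ((C * T ^ 2 : SL(2, ℤ)) : Matrix (Fin 2) (Fin 2) ℤ) = !![-1, 0; -1, -1] := by
  decide

lemma diff_preimage_mob_coe_eq_one_iff (M : SL(2, ℤ)) :
    baseTile \ mob M ⁻¹' baseTile = {((1 : ℝ) : OnePoint ℝ)} ↔
      (M 0 1 = 0 ∨ M 0 1 = M 1 1 ∨ M 1 1 = 0) ∧
        ¬(M 0 0 + M 0 1 = 0 ∨ M 0 0 + M 0 1 = M 1 0 + M 1 1 ∨ M 1 0 + M 1 1 = 0) ∧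
        (M 0 0 = 0 ∨ M 0 0 = M 1 0 ∨ M 1 0 = 0) := by
  rw [diff_preimage_baseTile_eq_one_iff, mob_coe_zero, mob_coe_one, mob_coe_infty,
    ratPoint_mem_baseTile_iff, ratPoint_mem_baseTile_iff, ratPoint_mem_baseTile_iff]

lemma diff_preimage_mob_eq_one_iff (y : PSL(2, ℤ)) :
    baseTile \ mob y ⁻¹' baseTile = {((1 : ℝ) : OnePoint ℝ)} ↔
      y = a * t ∨ y = b ∨ y = c * t ^ 2 := by
  constructor
  · obtain ⟨M, rfl⟩ := QuotientGroup.mk_surjective y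
    rw [diff_preimage_mob_coe_eq_one_iff]
    rintro ⟨h0, h1, hinf⟩
    have hdet : M 0 0 * M 1 1 - M 0 1 * M 1 0 = 1 := by
      rw [← Matrix.det_fin_two]
      exact M.2
    obtain ⟨ε, hε, ⟨h00, h01, h10, h11⟩ | ⟨h00, h01, h10, h11⟩ | ⟨h00, h01, h10, h11⟩⟩ :=
      entries_eq_of_det_eq_one hdet h0 h1 hinf
    · refine .inl (mk_eq_mk_of_eq_unit_mul hε ?_)
      simp only [Fin.forall_fin_two, coe_A_mul_T]
      simp [h00, h01, h10, h11]
    · refine .inr (.inl (mk_eq_mk_of_eq_unit_mul hε ?_))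
      simp only [Fin.forall_fin_two, coe_B]
      simp [h00, h01, h10, h11]
    · refine .inr (.inr (mk_eq_mk_of_eq_unit_mul hε ?_))
      simp only [Fin.forall_fin_two, coe_C_mul_T_sq]
      simp [h00, h01, h10, h11]
  · rintro (rfl | rfl | rfl)
    · rw [show a * t = ((A * T : SL(2, ℤ)) : PSL(2, ℤ)) from rfl,
        diff_preimage_mob_coe_eq_one_iff]
      simp only [coe_A_mul_T]
      decide
    · rw [b, diff_preimage_mob_coe_eq_one_iff]
      decide
    · rw [show c * t ^ 2 = ((C * T ^ 2 : SL(2, ℤ)) : PSL(2, ℤ)) from rfl,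
        diff_preimage_mob_coe_eq_one_iff]
      simp only [coe_C_mul_T_sq]
      decide

/-- The abelianisation `SL(2, 𝔽₃) → ℤ/3`, whose kernel is the quaternion group
`{g | tr g = 0} ∪ {±1}`; the polynomial merely interpolates it, and `decide` checks that it
is multiplicative. -/
def sl2ZMod3Char : SL(2, ZMod 3) →* Multiplicative (ZMod 3) where
  toFun g := .ofAdd ((g 0 0 + g 1 1) * (g 0 1 - g 1 0) * (1 + (g 0 1 + g 1 0) ^ 2))
  map_one' := by decide
  map_mul' := by decide

def pslChar : PSL(2, ℤ) →* Multiplicative (ZMod 3) :=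
  QuotientGroup.lift _
    (sl2ZMod3Char.comp (Matrix.SpecialLinearGroup.map (Int.castRingHom (ZMod 3))))
    fun g hg => by
      have hscalar := Matrix.SpecialLinearGroup.scalar_eq_self_of_mem_center hg 0
      have h01 := congrFun (congrFun hscalar 0) 1
      have h10 := congrFun (congrFun hscalar 1) 0
      simp only [Matrix.scalar_apply, Matrix.diagonal_apply_ne _ zero_ne_one,
        Matrix.diagonal_apply_ne _ one_ne_zero] at h01 h10
      simp [sl2ZMod3Char, ← h01, ← h10]

lemma fareyGroup_le_ker_pslChar : fareyGroup ≤ pslChar.ker := by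
  rw [fareyGroup, Subgroup.closure_le]
  rintro s (rfl | rfl | rfl) <;> exact MonoidHom.mem_ker.mpr (by decide)

lemma pslChar_t : pslChar t = .ofAdd 1 := by
  decide

lemma eq_of_mul_pow_t_eq_mul_pow_t {x s : PSL(2, ℤ)} (hx : x ∈ fareyGroup)
    (hs : s ∈ fareyGroup) {k j : ℕ} (hk : k < 3) (hj : j < 3) (h : x * t ^ k = s * t ^ j) :
    x = s := by
  have hkj : (k : ZMod 3) = j := by
    simpa [MonoidHom.mem_ker.mp (fareyGroup_le_ker_pslChar hx),
      MonoidHom.mem_ker.mp (fareyGroup_le_ker_pslChar hs), pslChar_t, ← ofAdd_nsmul]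
      using congrArg pslChar h
  obtain rfl : k = j := by
    interval_cases k <;> interval_cases j <;> first | rfl | exact absurd hkj (by decide)
  exact mul_right_cancel h

theorem areNeighbors_baseTile_tile_iff {x : PSL(2, ℤ)} (hx : x ∈ fareyGroup) :
    AreNeighbors baseTile (tile x) ↔ x ∈ ({a, b, c} : Set PSL(2, ℤ)) := by
  have ha : a ∈ fareyGroup := Subgroup.subset_closure (by simp)
  have hb : b ∈ fareyGroup := Subgroup.subset_closure (by simp)
  have hc : c ∈ fareyGroup := Subgroup.subset_closure (by simp)
  rw [areNeighbors_baseTile_tile_iff_ncard, ncard_diff_preimage_eq_one_iff_exists_pow_t]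
  simp only [diff_preimage_mob_eq_one_iff, Set.mem_insert_iff, Set.mem_singleton_iff]
  constructor
  · rintro ⟨k, hk, h | h | h⟩
    · exact .inl (eq_of_mul_pow_t_eq_mul_pow_t hx ha hk (j := 1) (by norm_num)
        (by rwa [pow_one]))
    · exact .inr (.inl (eq_of_mul_pow_t_eq_mul_pow_t hx hb hk (j := 0) (by norm_num)
        (by rwa [pow_zero, mul_one])))
    · exact .inr (.inr (eq_of_mul_pow_t_eq_mul_pow_t hx hc hk (by norm_num) h))
  · rintro (rfl | rfl | rfl)
    · exact ⟨1, by norm_num, .inl (by rw [pow_one])⟩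
    · exact ⟨0, by norm_num, .inr (.inl (by rw [pow_zero, mul_one]))⟩
    · exact ⟨2, by norm_num, .inr (.inr rfl)⟩

end Farey

open Farey

/-- **Lemma (neighboring tiles).** For `g, h` in the Farey group, write `Δ_g` for the image of
`{0,1,∞}` under the Möbius transformation `g`.  Then `Δ_g` and `Δ_h` are neighboring tiles of
the Farey tessellation — i.e. `Δ_g ≠ Δ_h` and `|Δ_g ∩ Δ_h| = 2` — if and only if `h = g·s`
for some `s ∈ {a,b,c}`. -/
theorem neighbor_iff (g h : PSL(2, ℤ)) (hg : g ∈ fareyGroup) (hh : h ∈ fareyGroup) :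
    (mob g '' {((0 : ℝ) : OnePoint ℝ), ((1 : ℝ) : OnePoint ℝ), ∞} ≠
        mob h '' {((0 : ℝ) : OnePoint ℝ), ((1 : ℝ) : OnePoint ℝ), ∞} ∧
      ((mob g '' {((0 : ℝ) : OnePoint ℝ), ((1 : ℝ) : OnePoint ℝ), ∞}) ∩
        (mob h '' {((0 : ℝ) : OnePoint ℝ), ((1 : ℝ) : OnePoint ℝ), ∞})).ncard = 2) ↔
    ∃ s ∈ ({a, b, c} : Set PSL(2, ℤ)), h = g * s := by
  change AreNeighbors (mob g '' baseTile) (tile h) ↔ _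
  have hgh : tile h = mob g '' tile (g⁻¹ * h) := by rw [← tile_mul, mul_inv_cancel_left]
  rw [hgh, areNeighbors_image_iff (mob_bijective g).1,
    areNeighbors_baseTile_tile_iff (mul_mem (inv_mem hg) hh)]
  exact ⟨fun hs => ⟨_, hs, (mul_inv_cancel_left g h).symm⟩,
    by rintro ⟨s, hs, rfl⟩; rwa [inv_mul_cancel_left]⟩
end
end
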